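/- Let 𝓕 be an r-dimensional vector space of real-valued functions on ℝ^p, and let 𝓐 = {{z : f(z) ≥ 0} : f ∈ 𝓕}. Then the VC dimension of 𝓐 is at most r; that is, no set of r+1 points in ℝ^p is shattered by 𝓐. -/

import Mathlib

/-!
If `𝓕` has dimension `r` and `G` has `r + 1` points, the `r + 1` evaluation functionals
`f ↦ f z` (`z ∈ G`) on `𝓕` are linearly dependent, so some nonzero `γ` satisfies
`∑ z ∈ G, γ z * f z = 0` for every `f ∈ 𝓕`; replacing `γ` by `-γ`, some `γ z` is negative.
If `G` were shattered, some `f ∈ 𝓕` would be nonnegative exactly on `{z ∈ G | 0 ≤ γ z}`. Then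
every term `γ z * f z` is nonnegative and the terms with `γ z < 0` are positive, so the sum
cannot vanish.
-/

open Module

theorem exists_orthogonal_of_finrank_lt {K X : Type*} [Field K] (𝓕 : Submodule K (X → K))
    [FiniteDimensional K 𝓕] (G : Finset X) (hG : finrank K 𝓕 < G.card) :
    ∃ γ : X → K, (∃ z ∈ G, γ z ≠ 0) ∧ ∀ f ∈ 𝓕, ∑ z ∈ G, γ z * f z = 0 := by
  set eval : X → Dual K 𝓕 := fun x => (LinearMap.proj x).comp 𝓕.subtype
  have hdep : ¬ LinearIndepOn K eval G := fun hli => by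
    have := hli.fintype_card_le_finrank
    simp only [Finset.coe_sort_coe, Fintype.card_coe, Subspace.dual_finrank_eq] at this
    omega
  simp only [linearIndepOn_iff'', not_forall, exists_prop] at hdep
  obtain ⟨t, γ, htG, hγt, hsum, z, hzt, hz⟩ := hdep
  refine ⟨γ, ⟨z, htG hzt, hz⟩, fun f hf => ?_⟩
  rw [← Finset.sum_subset htG fun x _ hxt => by simp [hγt x hxt]]
  simpa [eval] using LinearMap.congr_fun hsum ⟨f, hf⟩

theorem Finset.sum_mul_pos_of_nonneg_iff {ι R : Type*} [Ring R] [LinearOrder R]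
    [IsStrictOrderedRing R] {s : Finset ι} {γ f : ι → R}
    (hsign : ∀ i ∈ s, 0 ≤ γ i ↔ 0 ≤ f i) (hneg : ∃ i ∈ s, γ i < 0) :
    0 < ∑ i ∈ s, γ i * f i := by
  have hf : ∀ i ∈ s, γ i < 0 → f i < 0 := fun i hi => by
    simpa only [not_le] using (hsign i hi).not.1
  obtain ⟨i₀, hi₀, hγi₀⟩ := hneg
  refine Finset.sum_pos' (fun i hi => ?_) ⟨i₀, hi₀, mul_pos_of_neg_of_neg hγi₀ (hf i₀ hi₀ hγi₀)⟩
  rcases le_or_gt 0 (γ i) with hγi | hγi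
  · exact mul_nonneg hγi ((hsign i hi).1 hγi)
  · exact (mul_pos_of_neg_of_neg hγi (hf i hi hγi)).le

/-- If `𝓕` is an `r`-dimensional vector space of real functions on `ℝ^p` and
`𝓐 = {{z : f(z) ≥ 0} : f ∈ 𝓕}`, then no set of `r + 1` points is shattered by `𝓐`,
i.e. the VC dimension of `𝓐` is at most `r`. -/
theorem stmt_11 (p r : ℕ) (𝓕 : Submodule ℝ ((Fin p → ℝ) → ℝ))
    (hfd : FiniteDimensional ℝ 𝓕) (hr : Module.finrank ℝ 𝓕 = r) :
    ∀ G : Finset (Fin p → ℝ), G.card = r + 1 →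
      ¬ (∀ S ⊆ G, ∃ f ∈ 𝓕, ∀ z ∈ G, (z ∈ S ↔ 0 ≤ f z)) := by
  intro G hG hshat
  obtain ⟨γ, hγ0, hγ⟩ := exists_orthogonal_of_finrank_lt 𝓕 G (by omega)
  wlog hneg : ∃ z ∈ G, γ z < 0 generalizing γ
  · obtain ⟨z, hzG, hz⟩ := hγ0
    have hpos : 0 < γ z := (not_lt.1 fun h => hneg ⟨z, hzG, h⟩).lt_of_ne' hz
    exact this (-γ) ⟨z, hzG, by simpa using hz⟩ (by simpa using hγ) ⟨z, hzG, by simpa using hpos⟩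
  obtain ⟨f, hf, hfS⟩ := hshat (G.filter (0 ≤ γ ·)) (Finset.filter_subset _ _)
  refine (Finset.sum_mul_pos_of_nonneg_iff (fun z hz => ?_) hneg).ne' (hγ f hf)
  simpa [hz] using hfS z hz
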